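/- Let (τ_x)_{x∈S} be a family of nonnegative Lipschitz functions on a metric space C, each with Lipschitz constant at most L, such that at each point of C at most N of the τ_x are nonzero, and such that Σ_x τ_x² ≥ 1/2 everywhere. Then the functions ψ_x = τ_x / (Σ_z τ_z²)^{1/2} satisfy Σ_x ψ_x² = 1, and each ψ_x is Lipschitz with constant at most 2^{5/2} N L. -/

import Mathlib

/-! Write `σ(p) = (Σ_z τ_z(p)²)^{1/2} ≥ 2^{-1/2}`. Since
`|σ(p)² - σ(q)²| ≤ L d(p, q) (Σ_z τ_z(p) + Σ_z τ_z(q))` and, by Cauchy–Schwarz over the at most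
`N` nonzero terms, `Σ_z τ_z ≤ √N σ`, dividing by `σ(p) + σ(q)` shows that `σ` is `√N L`-Lipschitz.
Then `ψ_x(p) - ψ_x(q) = (τ_x(p) - τ_x(q)) / σ(p) + ψ_x(q) (σ(q) - σ(p)) / σ(p)` with
`0 ≤ ψ_x(q) ≤ 1` gives the constant `√2 (1 + √N) L ≤ 2^{5/2} N L`. -/

open Finset

lemma abs_sqrt_sub_sqrt_mul_add {a b : ℝ} (ha : 0 ≤ a) (hb : 0 ≤ b) :
    |√a - √b| * (√a + √b) = |a - b| := by
  rw [← abs_of_nonneg (by positivity : 0 ≤ √a + √b), ← abs_mul]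
  congr 1
  linear_combination Real.sq_sqrt ha - Real.sq_sqrt hb

lemma abs_div_sub_div_le {a b s t : ℝ} (hs : 0 < s) (ht : 0 < t) (hb : 0 ≤ b) (hbt : b ≤ t) :
    |a / s - b / t| ≤ (|a - b| + |s - t|) / s := by
  have hsplit : a / s - b / t = ((a - b) + b / t * (t - s)) / s := by
    field_simp
    ring
  rw [hsplit, abs_div, abs_of_pos hs]
  gcongr
  calc |a - b + b / t * (t - s)| ≤ |a - b| + |b / t * (t - s)| := abs_add_le _ _
    _ = |a - b| + b / t * |t - s| := by rw [abs_mul, abs_of_nonneg (by positivity : 0 ≤ b / t)]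
    _ ≤ |a - b| + |s - t| := by
        rw [abs_sub_comm t s]
        gcongr
        exact mul_le_of_le_one_left (abs_nonneg _) ((div_le_one ht).2 hbt)

lemma abs_sum_sq_sub_sum_sq_le {ι : Type*} (s : Finset ι) {f g : ι → ℝ} {δ : ℝ}
    (hf : ∀ i, 0 ≤ f i) (hg : ∀ i, 0 ≤ g i) (hfg : ∀ i, |f i - g i| ≤ δ) :
    |∑ i ∈ s, f i ^ 2 - ∑ i ∈ s, g i ^ 2| ≤ δ * (∑ i ∈ s, f i + ∑ i ∈ s, g i) := by
  rw [← sum_sub_distrib, ← sum_add_distrib, mul_sum]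
  refine (abs_sum_le_sum_abs _ _).trans (sum_le_sum fun i _ => ?_)
  rw [sq_sub_sq, abs_mul, abs_of_nonneg (add_nonneg (hf i) (hg i)), mul_comm]
  exact mul_le_mul_of_nonneg_right (hfg i) (add_nonneg (hf i) (hg i))

section tsum

variable {ι : Type*} {f g : ι → ℝ}

lemma le_sqrt_tsum_sq (hf : Summable fun i => f i ^ 2) (i : ι) : f i ≤ √(∑' j, f j ^ 2) :=
  (le_abs_self _).trans <| Real.abs_le_sqrt <|
    hf.le_tsum i fun j _ => sq_nonneg (f j)

lemma tsum_div_sqrt_tsum_sq_sq (h : ∑' i, f i ^ 2 ≠ 0) :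
    ∑' i, (f i / √(∑' j, f j ^ 2)) ^ 2 = 1 := by
  simp_rw [div_pow, Real.sq_sqrt (tsum_nonneg fun j => sq_nonneg (f j))]
  rw [tsum_div_const, div_self h]

lemma tsum_le_sqrt_mul_sqrt_tsum_sq {N : ℕ} (hN : (Function.support f).encard ≤ N) :
    ∑' i, f i ≤ √N * √(∑' i, f i ^ 2) := by
  obtain ⟨hfin, hcard⟩ := Set.encard_le_coe_iff_finite_ncard_le.1 hN
  have hsupp : Function.support f ⊆ hfin.toFinset := by simp
  rw [tsum_eq_sum' hsupp, tsum_eq_sum' ((Function.support_pow f two_ne_zero).trans_subset hsupp),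
    ← Real.sqrt_mul N.cast_nonneg]
  refine (le_abs_self _).trans (Real.abs_le_sqrt ((sq_sum_le_card_mul_sum_sq).trans ?_))
  gcongr
  rw [← Set.ncard_eq_toFinset_card _ hfin]
  exact_mod_cast hcard

lemma abs_sqrt_tsum_sq_sub_sqrt_tsum_sq_le {N : ℕ} {δ : ℝ} (hf : ∀ i, 0 ≤ f i)
    (hg : ∀ i, 0 ≤ g i) (hfN : (Function.support f).encard ≤ N)
    (hgN : (Function.support g).encard ≤ N) (hδ : 0 ≤ δ) (hfg : ∀ i, |f i - g i| ≤ δ) :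
    |√(∑' i, f i ^ 2) - √(∑' i, g i ^ 2)| ≤ √N * δ := by
  classical
  set σf := √(∑' i, f i ^ 2)
  set σg := √(∑' i, g i ^ 2)
  have hσf : 0 ≤ σf := Real.sqrt_nonneg _
  have hσg : 0 ≤ σg := Real.sqrt_nonneg _
  rcases (add_nonneg hσf hσg).eq_or_lt with h | h
  · obtain ⟨hf0, hg0⟩ := (add_eq_zero_iff_of_nonneg hσf hσg).1 h.symm
    rw [hf0, hg0, sub_zero, abs_zero]
    positivity
  have hfin := Set.finite_of_encard_le_coe hfN
  have hgin := Set.finite_of_encard_le_coe hgN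
  set u := hfin.toFinset ∪ hgin.toFinset
  have hfu : Function.support f ⊆ u := by simp [u]
  have hgu : Function.support g ⊆ u := by simp [u]
  have hsq : ∀ {h : ι → ℝ}, Function.support h ⊆ u → Function.support (fun i => h i ^ 2) ⊆ u :=
    fun hu => (Function.support_pow _ two_ne_zero).trans_subset hu
  refine le_of_mul_le_mul_right ?_ h
  calc |σf - σg| * (σf + σg) = |∑' i, f i ^ 2 - ∑' i, g i ^ 2| :=
        abs_sqrt_sub_sqrt_mul_add (tsum_nonneg fun i => sq_nonneg _)
          (tsum_nonneg fun i => sq_nonneg _)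
    _ ≤ δ * (∑' i, f i + ∑' i, g i) := by
        rw [tsum_eq_sum' (hsq hfu), tsum_eq_sum' (hsq hgu), tsum_eq_sum' hfu, tsum_eq_sum' hgu]
        exact abs_sum_sq_sub_sum_sq_le u hf hg hfg
    _ ≤ δ * (√N * σf + √N * σg) := by
        gcongr
        exacts [tsum_le_sqrt_mul_sqrt_tsum_sq hfN, tsum_le_sqrt_mul_sqrt_tsum_sq hgN]
    _ = √N * δ * (σf + σg) := by ring

lemma one_le_of_support_encard_le {N : ℕ} (hN : (Function.support f).encard ≤ N)
    (h : ∑' i, f i ^ 2 ≠ 0) : (1 : ℝ) ≤ N := by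
  have hne : (Function.support f).Nonempty :=
    Function.support_nonempty_iff.2 fun hf => h (by simp [hf])
  exact_mod_cast (Set.one_le_encard_iff_nonempty.2 hne).trans hN

end tsum

lemma sqrt_two_mul_one_add_sqrt_le {n : ℝ} (hn : 1 ≤ n) :
    √2 * (1 + √n) ≤ 2 ^ ((5 : ℝ) / 2) * n := by
  have hsqrt : √n ≤ n := (Real.sqrt_le_left (by positivity)).2 (by nlinarith)
  have htwo : (2 : ℝ) ^ ((5 : ℝ) / 2) = √2 * 4 := by
    rw [show (5 : ℝ) / 2 = 1 / 2 + 2 by norm_num, Real.rpow_add two_pos, Real.rpow_two,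
      Real.sqrt_eq_rpow]
    norm_num
  rw [htwo, mul_assoc]
  gcongr
  linarith

theorem normalized_partition_general {C : Type*} [MetricSpace C] {S : Type*}
    (τ : S → C → ℝ) (L : ℝ) (N : ℕ)
    (hnonneg : ∀ x p, 0 ≤ τ x p)
    (hlip : ∀ x p q, |τ x p - τ x q| ≤ L * dist p q)
    (hmult : ∀ p : C, {x : S | τ x p ≠ 0}.Finite ∧ {x : S | τ x p ≠ 0}.encard ≤ N)
    (hsum : ∀ p : C, (1 : ℝ) / 2 ≤ ∑' x, τ x p ^ 2) :
    (∀ p : C, (∑' x, (τ x p / Real.sqrt (∑' z, τ z p ^ 2)) ^ 2) = 1) ∧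
      (∀ x : S, ∀ p q : C,
        |τ x p / Real.sqrt (∑' z, τ z p ^ 2) - τ x q / Real.sqrt (∑' z, τ z q ^ 2)| ≤
          2 ^ ((5 : ℝ) / 2) * N * L * dist p q) := by
  have hσ : ∀ p, (√2)⁻¹ ≤ √(∑' z, τ z p ^ 2) := fun p => by
    rw [← Real.sqrt_inv]
    exact Real.sqrt_le_sqrt (by linarith [hsum p])
  have hσpos : ∀ p, 0 < √(∑' z, τ z p ^ 2) := fun p =>
    (by positivity : (0 : ℝ) < (√2)⁻¹).trans_le (hσ p)
  refine ⟨fun p => tsum_div_sqrt_tsum_sq_sq (by linarith [hsum p]), fun x p q => ?_⟩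
  have hLd : 0 ≤ L * dist p q := (abs_nonneg _).trans (hlip x p q)
  calc _ ≤ (|τ x p - τ x q| + |√(∑' z, τ z p ^ 2) - √(∑' z, τ z q ^ 2)|) / √(∑' z, τ z p ^ 2) :=
        abs_div_sub_div_le (hσpos p) (hσpos q) (hnonneg x q)
          (le_sqrt_tsum_sq (summable_of_hasFiniteSupport
            ((hmult q).1.subset (Function.support_pow _ two_ne_zero).subset)) x)
    _ ≤ (L * dist p q + √N * (L * dist p q)) * √2 := by
        rw [div_eq_mul_inv]
        gcongr
        · exact hlip x p q
        · exact abs_sqrt_tsum_sq_sub_sqrt_tsum_sq_le (hnonneg · p) (hnonneg · q) (hmult p).2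
            (hmult q).2 hLd (hlip · p q)
        · exact inv_le_of_inv_le₀ (by positivity) (hσ p)
    _ = √2 * (1 + √N) * (L * dist p q) := by ring
    _ ≤ 2 ^ ((5 : ℝ) / 2) * N * (L * dist p q) :=
        mul_le_mul_of_nonneg_right (sqrt_two_mul_one_add_sqrt_le
          (one_le_of_support_encard_le (hmult p).2 (by linarith [hsum p]))) hLd
    _ = 2 ^ ((5 : ℝ) / 2) * N * L * dist p q := by ring

/-- Normalizing a uniformly Lipschitz partition-like family `τ_x` with `Σ τ_x² ≥ 1/2` and
multiplicity at most `N` yields `ψ_x = τ_x / (Σ_z τ_z²)^{1/2}` with `Σ ψ_x² = 1` and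
Lipschitz constant at most `2^{5/2} N L`. -/
theorem normalized_partition {C : Type*} [MetricSpace C] {S : Type*}
    (τ : S → C → ℝ) (L : ℝ) (hL : 0 ≤ L) (N : ℕ)
    (hnonneg : ∀ x p, 0 ≤ τ x p)
    (hlip : ∀ x p q, |τ x p - τ x q| ≤ L * dist p q)
    (hmult : ∀ p : C, {x : S | τ x p ≠ 0}.Finite ∧ {x : S | τ x p ≠ 0}.encard ≤ N)
    (hsum : ∀ p : C, (1 : ℝ) / 2 ≤ ∑' x, τ x p ^ 2) :
    (∀ p : C, (∑' x, (τ x p / Real.sqrt (∑' z, τ z p ^ 2)) ^ 2) = 1) ∧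
      (∀ x : S, ∀ p q : C,
        |τ x p / Real.sqrt (∑' z, τ z p ^ 2) - τ x q / Real.sqrt (∑' z, τ z q ^ 2)| ≤
          2 ^ ((5 : ℝ) / 2) * N * L * dist p q) :=
  normalized_partition_general τ L N hnonneg hlip hmult hsum
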